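/- Let p < q be reals, set t₀ = (p + q)/2 and z₀ = (q − p)/2, and for s ∈ ℝ define φ_s(t) = (q − t) e^{πs} + (t − p) e^{−πs} and m_s(t) = ((q − t) p e^{πs} + (t − p) q e^{−πs})/φ_s(t) whenever φ_s(t) ≠ 0. Let t₊ ≠ t₋ be reals. Then for every s ∈ ℝ such that φ_{−s}(t₊) ≠ 0, φ_{−s}(t₋) ≠ 0 and m_{−s}(t₊) ≠ m_{−s}(t₋), setting T(s) = (m_{−s}(t₊) + m_{−s}(t₋))/2 and Z(s) = (m_{−s}(t₊) − m_{−s}(t₋))/2, the quantity (Z(s)² + z₀² − (T(s) − t₀)²)/(2 Z(s) z₀) equals its value at s = 0, namely (Z(0)² + z₀² − (T(0) − t₀)²)/(2 Z(0) z₀). -/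

import Mathlib

/-!
`m_s` is a Möbius map fixing `p` and `q`, and it multiplies both products
`(m t - p)(q - m t')` and `(q - m t)(m t' - p)` by the same factor `(q - p)² / (φ_s(t) φ_s(t'))`.
For a bulk point with null coordinates `A`, `B`, the invariant distance from `(t₀, z₀)` is
`(X + Y) / (X - Y)` with `X = (A - p)(q - B)`, `Y = (q - A)(B - p)`, so it is unchanged by the flow.
-/

/-- Conformal factor numerator of the modular flow of the interval `(p, q)`:
`φ_s(t) = (q - t) e^{πs} + (t - p) e^{-πs}`. -/
noncomputable def phiFlow (p q s t : ℝ) : ℝ :=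
  (q - t) * Real.exp (Real.pi * s) + (t - p) * Real.exp (-(Real.pi * s))

/-- Point transformation implemented by the modular flow of the interval `(p, q)`. -/
noncomputable def mFlow (p q s t : ℝ) : ℝ :=
  ((q - t) * p * Real.exp (Real.pi * s) + (t - p) * q * Real.exp (-(Real.pi * s))) /
    phiFlow p q s t

/-- Poincaré time of the bulk point with null coordinates `m_{-s}(t₊)`, `m_{-s}(t₋)`. -/
noncomputable def Tmid (p q tp tm s : ℝ) : ℝ :=
  (mFlow p q (-s) tp + mFlow p q (-s) tm) / 2

/-- Poincaré radial coordinate of the bulk point with null coordinates `m_{-s}(t₊)`, `m_{-s}(t₋)`. -/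
noncomputable def Zhalf (p q tp tm s : ℝ) : ℝ :=
  (mFlow p q (-s) tp - mFlow p q (-s) tm) / 2

open Real

/-- `cosh` of the geodesic distance between `(t, z)` and `(t', z')` in Poincaré AdS₂. -/
noncomputable def adsInvariantDist (t z t' z' : ℝ) : ℝ :=
  (z ^ 2 + z' ^ 2 - (t - t') ^ 2) / (2 * z * z')

theorem adsInvariantDist_null_coords (p q A B : ℝ) :
    adsInvariantDist ((A + B) / 2) ((A - B) / 2) ((p + q) / 2) ((q - p) / 2) =
      ((A - p) * (q - B) + (q - A) * (B - p)) / ((A - p) * (q - B) - (q - A) * (B - p)) := by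
  rw [adsInvariantDist,
    show ((A - B) / 2) ^ 2 + ((q - p) / 2) ^ 2 - ((A + B) / 2 - (p + q) / 2) ^ 2 =
      ((A - p) * (q - B) + (q - A) * (B - p)) / 2 by ring,
    show 2 * ((A - B) / 2) * ((q - p) / 2) = ((A - p) * (q - B) - (q - A) * (B - p)) / 2 by ring,
    div_div_div_cancel_right₀ two_ne_zero]

section Flow

variable {p q s t t' : ℝ}

theorem mFlow_sub_left (h : phiFlow p q s t ≠ 0) :
    mFlow p q s t - p = (t - p) * (q - p) * exp (-(π * s)) / phiFlow p q s t := by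
  rw [mFlow, div_sub' h, phiFlow]
  congr 1
  ring

theorem sub_mFlow_right (h : phiFlow p q s t ≠ 0) :
    q - mFlow p q s t = (q - t) * (q - p) * exp (π * s) / phiFlow p q s t := by
  rw [mFlow, sub_div' h, phiFlow]
  congr 1
  ring

theorem mFlow_sub_left_mul_sub_mFlow_right (h : phiFlow p q s t ≠ 0)
    (h' : phiFlow p q s t' ≠ 0) :
    (mFlow p q s t - p) * (q - mFlow p q s t') =
      (q - p) ^ 2 / (phiFlow p q s t * phiFlow p q s t') * ((t - p) * (q - t')) := by
  have hexp : exp (-(π * s)) * exp (π * s) = 1 := by rw [← exp_add, neg_add_cancel, exp_zero]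
  rw [mFlow_sub_left h, sub_mFlow_right h']
  field_simp
  linear_combination (t - p) * (q - t') * (q - p) ^ 2 * hexp

theorem mFlow_zero (hpq : p ≠ q) (t : ℝ) : mFlow p q 0 t = t := by
  have hqp : q - p ≠ 0 := sub_ne_zero.mpr hpq.symm
  rw [mFlow, phiFlow, div_eq_iff (by simpa using hqp)]
  simp only [mul_zero, neg_zero, exp_zero, mul_one]
  ring

end Flow

theorem add_div_sub_mul_left {K : Type*} [Field K] {c : K} (hc : c ≠ 0) (X Y : K) :
    (c * X + c * Y) / (c * X - c * Y) = (X + Y) / (X - Y) := by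
  rw [← mul_add, ← mul_sub, mul_div_mul_left _ _ hc]

theorem bulk_modular_flow_constant_invariant_distance_general
    (p q : ℝ) (hpq : p < q) (tp tm : ℝ) (s : ℝ)
    (h1 : phiFlow p q (-s) tp ≠ 0) (h2 : phiFlow p q (-s) tm ≠ 0) :
    (Zhalf p q tp tm s ^ 2 + ((q - p) / 2) ^ 2 - (Tmid p q tp tm s - (p + q) / 2) ^ 2) /
        (2 * Zhalf p q tp tm s * ((q - p) / 2)) =
      (Zhalf p q tp tm 0 ^ 2 + ((q - p) / 2) ^ 2 - (Tmid p q tp tm 0 - (p + q) / 2) ^ 2) /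
        (2 * Zhalf p q tp tm 0 * ((q - p) / 2)) := by
  change adsInvariantDist _ _ _ _ = adsInvariantDist _ _ _ _
  have hc : (q - p) ^ 2 / (phiFlow p q (-s) tp * phiFlow p q (-s) tm) ≠ 0 :=
    div_ne_zero (pow_ne_zero _ (sub_ne_zero.mpr hpq.ne')) (mul_ne_zero h1 h2)
  simp only [Tmid, Zhalf, neg_zero, mFlow_zero hpq.ne, adsInvariantDist_null_coords]
  rw [mFlow_sub_left_mul_sub_mFlow_right h1 h2, mul_comm (q - _),
    mFlow_sub_left_mul_sub_mFlow_right h2 h1, mul_comm (phiFlow _ _ _ tm),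
    add_div_sub_mul_left hc, mul_comm (tm - p)]

/-- The bulk modular flow moves a bulk point along a trajectory of constant AdS₂-invariant
distance from the bulk point `(t₀, z₀) = ((p+q)/2, (q-p)/2)` (Section 5.2): the quantity
`(Z(s)² + z₀² - (T(s) - t₀)²)/(2 Z(s) z₀)` is independent of `s`. -/
theorem bulk_modular_flow_constant_invariant_distance
    (p q : ℝ) (hpq : p < q) (tp tm : ℝ) (htpm : tp ≠ tm) (s : ℝ)
    (h1 : phiFlow p q (-s) tp ≠ 0) (h2 : phiFlow p q (-s) tm ≠ 0)
    (h3 : mFlow p q (-s) tp ≠ mFlow p q (-s) tm) :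
    (Zhalf p q tp tm s ^ 2 + ((q - p) / 2) ^ 2 - (Tmid p q tp tm s - (p + q) / 2) ^ 2) /
        (2 * Zhalf p q tp tm s * ((q - p) / 2)) =
      (Zhalf p q tp tm 0 ^ 2 + ((q - p) / 2) ^ 2 - (Tmid p q tp tm 0 - (p + q) / 2) ^ 2) /
        (2 * Zhalf p q tp tm 0 * ((q - p) / 2)) :=
  bulk_modular_flow_constant_invariant_distance_general p q hpq tp tm s h1 h2
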